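/- arXiv:1402.4706 — 5 statements merged into one kernel-verified Lean document; each statement's English description precedes it below -/
import Mathlib

section
/- A ring R has stable range one if and only if every right unit lifts modulo every right principal ideal, i.e., for all a, b, c ∈ R with ab - 1 ∈ cR there exists a right invertible u ∈ R with a - u ∈ cR. -/
/-!
If `a` has stable range one, lifting is immediate: `ab - 1 = cr` rewrites as `ab + (-cr) = 1`, and
the unit `a - cry` lifts `a` modulo `cR`. Conversely, the lifting property first forces `R` to be
Dedekind-finite: if `ts = 1`, lifting `s` modulo `(st - 1)R` gives a right invertible `u` with
`tu = 1` (as `t(st - 1) = 0`), so `t` is a unit. Then from `ax + b = 1` we get `ax - 1 ∈ bR`, and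
a right invertible lift `a + by` of `a` modulo `bR` is a unit.
-/

def HasStableRangeOne (R : Type*) [Ring R] : Prop :=
  ∀ a x b : R, a * x + b = 1 → ∃ y : R, IsUnit (a + b * y)

def RightUnitsLift (R : Type*) [Ring R] : Prop :=
  ∀ a b c : R, (∃ r : R, a * b - 1 = c * r) →
    ∃ u : R, (∃ v : R, u * v = 1) ∧ ∃ r : R, a - u = c * r

section

variable {R : Type*} [Ring R]

theorem HasStableRangeOne.rightUnitsLift (H : HasStableRangeOne R) : RightUnitsLift R := by
  rintro a b c ⟨r, hr⟩
  obtain ⟨y, hy⟩ := H a b (-(c * r)) (by rw [← sub_eq_add_neg, ← hr, sub_sub_cancel])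
  refine ⟨a + -(c * r) * y, ⟨_, hy.mul_val_inv⟩, r * y, ?_⟩
  noncomm_ring

theorem RightUnitsLift.isUnit_of_mul_eq_one (H : RightUnitsLift R) {t s : R} (hts : t * s = 1) :
    IsUnit t := by
  obtain ⟨u, ⟨w, huw⟩, q, hq⟩ := H s t (s * t - 1) ⟨1, (mul_one _).symm⟩
  have ht_kills : t * (s * t - 1) = 0 := by
    rw [mul_sub, ← mul_assoc, hts, one_mul, mul_one, sub_self]
  have htu : t * u = 1 := by
    rw [← sub_sub_cancel s u, hq, mul_sub, ← mul_assoc, ht_kills, zero_mul, sub_zero, hts]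
  have hut : u * t = 1 := left_inv_eq_right_inv htu huw ▸ huw
  exact isUnit_iff_exists.mpr ⟨u, htu, hut⟩

theorem RightUnitsLift.hasStableRangeOne (H : RightUnitsLift R) : HasStableRangeOne R := by
  intro a x b hab
  obtain ⟨t, ⟨s, hts⟩, r, htr⟩ := H a x b ⟨-1, by rw [mul_neg_one, ← hab]; abel⟩
  refine ⟨-r, ?_⟩
  have hat : a + b * -r = t := by rw [mul_neg, ← htr]; noncomm_ring
  exact hat ▸ H.isUnit_of_mul_eq_one hts

end

theorem stmt_6 (R : Type*) [Ring R] :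
    (∀ a x b : R, a * x + b = 1 → ∃ y : R, IsUnit (a + b * y)) ↔
    (∀ a b c : R, (∃ r : R, a * b - 1 = c * r) →
      ∃ u : R, (∃ v : R, u * v = 1) ∧ ∃ r : R, a - u = c * r) :=
  ⟨HasStableRangeOne.rightUnitsLift, RightUnitsLift.hasStableRangeOne⟩
end

section
/- If a ring R has stable range one, then R is left uniquely generated: for all a, b ∈ R, Ra = Rb implies there exists a unit u ∈ R with a = ub. -/
/-!
Write `a = s * b` and `b = t * a`. Stable range one applied to `t * s + (1 - t * s) = 1` gives a
unit `t + (1 - t * s) * y`; by the left-right symmetry of stable range one, `w = t + y * (1 - s * t)`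
is a unit as well. Since `(1 - s * t) * a = a - s * b = 0`, we get `w * a = t * a = b`, so
`a = w⁻¹ * b`.
-/

/-- The inverse is `x + (1 - x * y) * v * (1 - a * x)`, where `v` inverts `a + (1 - a * x) * y`. -/
theorem IsUnit.add_mul_one_sub_mul {R : Type*} [Ring R] {a x y : R} (h : IsUnit (a + (1 - a * x) * y)) :
    IsUnit (a + y * (1 - x * a)) := by
  obtain ⟨v, hv_right, hv_left⟩ := isUnit_iff_exists.mp h
  refine isUnit_iff_exists.mpr ⟨x + (1 - x * y) * v * (1 - a * x), ?_, ?_⟩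
  · have key : (a + y * (1 - x * a)) * (x + (1 - x * y) * v * (1 - a * x)) - 1
        = (1 - y * x) * ((a + (1 - a * x) * y) * v - 1) * (1 - a * x) := by
      noncomm_ring
    rwa [hv_right, sub_self, mul_zero, zero_mul, sub_eq_zero] at key
  · have key : (x + (1 - x * y) * v * (1 - a * x)) * (a + y * (1 - x * a)) - 1
        = (1 - x * y) * (v * (a + (1 - a * x) * y) - 1) * (1 - x * a) := by
      noncomm_ring
    rwa [hv_left, sub_self, mul_zero, zero_mul, sub_eq_zero] at key

theorem stmt_8 (R : Type*) [Ring R]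
    (hsr : ∀ a x b : R, a * x + b = 1 → ∃ y : R, IsUnit (a + b * y)) :
    ∀ a b : R, (∀ r : R, (∃ s : R, r = s * a) ↔ (∃ s : R, r = s * b)) →
      ∃ u : R, IsUnit u ∧ a = u * b := by
  intro a b hab
  obtain ⟨s, hs⟩ := (hab a).mp ⟨1, (one_mul a).symm⟩
  obtain ⟨t, ht⟩ := (hab b).mpr ⟨1, (one_mul b).symm⟩
  obtain ⟨y, hy⟩ := hsr t s (1 - t * s) (add_sub_cancel _ _)
  obtain ⟨w, hw⟩ := hy.add_mul_one_sub_mul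
  have hwa : (w : R) * a = b := by
    have hst : (1 - s * t) * a = 0 := by
      rw [sub_mul, one_mul, mul_assoc, ← ht, ← hs, sub_self]
    rw [hw, add_mul, mul_assoc, hst, mul_zero, add_zero, ht]
  exact ⟨_, w⁻¹.isUnit, w.eq_inv_mul_iff_mul_eq.mpr hwa⟩
end

section
/- Every right uniquely generated ring is directly finite: if R is a ring such that aR = bR implies a = bu for some unit u, then ab = 1 implies ba = 1 for all a, b ∈ R. -/
/-! If `a * b = 1` then `aR = R = 1R`, so unique generation makes `a` associate to `1`, i.e. a
unit; a one-sided inverse of a unit is its inverse. -/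

theorem exists_eq_mul_of_mul_eq_one {M : Type*} [Monoid M] {a b : M} (hab : a * b = 1) (r : M) :
    ∃ s, r = a * s :=
  ⟨b * r, by rw [← mul_assoc, hab, one_mul]⟩

theorem IsUnit.mul_eq_one_symm {M : Type*} [Monoid M] {a b : M} (ha : IsUnit a)
    (hab : a * b = 1) : b * a = 1 := by
  obtain ⟨u, rfl⟩ := ha
  rw [Units.eq_inv_of_mul_eq_one_left hab, u.inv_mul]

theorem stmt_12 (R : Type*) [Ring R]
    (hug : ∀ a b : R, (∀ r : R, (∃ s : R, r = a * s) ↔ (∃ s : R, r = b * s)) →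
      ∃ u : R, IsUnit u ∧ a = b * u) :
    ∀ a b : R, a * b = 1 → b * a = 1 := by
  intro a b hab
  have hspan : ∀ r : R, (∃ s, r = a * s) ↔ (∃ s, r = 1 * s) := fun r =>
    ⟨fun _ => ⟨r, (one_mul r).symm⟩, fun _ => exists_eq_mul_of_mul_eq_one hab r⟩
  obtain ⟨u, hu, hau⟩ := hug a 1 hspan
  rw [one_mul] at hau
  exact (hau ▸ hu).mul_eq_one_symm hab
end

section
/- Let R be a ring with stable range one and let a, b ∈ R with Ra = Rb. Writing a = xb and b = ya, one has (1 - yx)b = 0, and there exists t ∈ R such that u = x + t(1 - yx) is a unit satisfying a = ub. -/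
theorem one_sub_mul_mul_eq_zero {R : Type*} [Ring R] {x y b : R} (h : y * (x * b) = b) :
    (1 - y * x) * b = 0 := by
  rw [sub_mul, one_mul, mul_assoc, h, sub_self]

theorem add_mul_one_sub_mul_eq_of_mul_eq_zero {R : Type*} [Ring R] {x y b : R}
    (h : (1 - y * x) * b = 0) (t : R) : (x + t * (1 - y * x)) * b = x * b := by
  rw [add_mul, mul_assoc, h, mul_zero, add_zero]

/-- In a ring of stable range one, `x` can be corrected to a unit along `1 - y * x`,
since `R x + R (1 - y * x) = R`. -/
theorem exists_isUnit_add_mul_one_sub_mul {R : Type*} [Ring R]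
    (hsr : ∀ x z : R, (∃ r s : R, r * x + s * z = 1) → ∃ t : R, IsUnit (x + t * z)) (x y : R) :
    ∃ t : R, IsUnit (x + t * (1 - y * x)) :=
  hsr x (1 - y * x) ⟨y, 1, by noncomm_ring⟩

theorem stmt_15_general (R : Type*) [Ring R]
    (hsr : ∀ x z : R, (∃ r s : R, r * x + s * z = 1) → ∃ t : R, IsUnit (x + t * z))
    (a b x y : R)
    (hx : a = x * b) (hy : b = y * a) :
    (1 - y * x) * b = 0 ∧ ∃ t : R, IsUnit (x + t * (1 - y * x)) ∧ a = (x + t * (1 - y * x)) * b := by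
  have hb : (1 - y * x) * b = 0 := one_sub_mul_mul_eq_zero (by rw [← hx, ← hy])
  obtain ⟨t, ht⟩ := exists_isUnit_add_mul_one_sub_mul hsr x y
  exact ⟨hb, t, ht, by rw [add_mul_one_sub_mul_eq_of_mul_eq_zero hb, hx]⟩

theorem stmt_15 (R : Type*) [Ring R]
    (hsr : ∀ x z : R, (∃ r s : R, r * x + s * z = 1) → ∃ t : R, IsUnit (x + t * z))
    (a b x y : R) (hRab : ∀ r : R, (∃ s : R, r = s * a) ↔ (∃ s : R, r = s * b))
    (hx : a = x * b) (hy : b = y * a) :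
    (1 - y * x) * b = 0 ∧ ∃ t : R, IsUnit (x + t * (1 - y * x)) ∧ a = (x + t * (1 - y * x)) * b :=
  stmt_15_general R hsr a b x y hx hy
end

section
/- If R is a ring in which every left unit lifts modulo every left principal ideal, then every left unit of R is invertible (a two-sided unit). -/
/-! If `v * u = 1`, then `c = 1 - u * v` annihilates `u` from the left and `u * v ≡ 1` modulo `R c`.
Lifting `v` modulo `R c` to a left unit `w` keeps `w * u = v * u = 1`, and a left unit with a right
inverse is a unit; so `u * w = 1`, and `v = w` as both are left inverses of the unit `u`. -/

theorem one_sub_mul_mul_eq_zero_of_mul_eq_one {R : Type*} [Ring R] {u v : R} (h : v * u = 1) :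
    (1 - u * v) * u = 0 := by
  rw [sub_mul, one_mul, mul_assoc, h, mul_one, sub_self]

theorem isDedekindFiniteMonoid_of_forall_exists_leftUnit_sub_mem {R : Type*} [Ring R]
    (h : ∀ a b c : R, (∃ r : R, a * b - 1 = r * c) →
      ∃ u : R, (∃ v : R, v * u = 1) ∧ ∃ r : R, b - u = r * c) :
    IsDedekindFiniteMonoid R where
  mul_eq_one_symm {v u} hvu := by
    obtain ⟨w, ⟨s, hsw⟩, r, hvw⟩ := h u v (1 - u * v) ⟨-1, by noncomm_ring⟩
    have hwu : w * u = 1 := by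
      have : (v - w) * u = 0 := by
        rw [hvw, mul_assoc, one_sub_mul_mul_eq_zero_of_mul_eq_one hvu, mul_zero]
      rwa [sub_mul, sub_eq_zero, hvu, eq_comm] at this
    have huw : u * w = 1 := left_inv_eq_right_inv hsw hwu ▸ hsw
    rwa [left_inv_eq_right_inv hvu huw]

theorem stmt_18 (R : Type*) [Ring R]
    (h : ∀ a b c : R, (∃ r : R, a * b - 1 = r * c) →
      ∃ u : R, (∃ v : R, v * u = 1) ∧ ∃ r : R, b - u = r * c) :
    ∀ u : R, (∃ v : R, v * u = 1) → IsUnit u := by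
  have := isDedekindFiniteMonoid_of_forall_exists_leftUnit_sub_mem h
  rintro u ⟨v, hvu⟩
  exact IsUnit.of_mul_eq_one_right v hvu
end
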